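/- arXiv:1004.3016 — 3 statements merged into one kernel-verified Lean document; each statement's English description precedes it below -/
import Mathlib

section
/- Let α ∈ (0,1], t > 0, and let (μ_t^α) be a family of probability measures on [0,∞) whose Laplace transforms satisfy ∫_0^∞ e^{-xs} μ_t^α(ds) = e^{-t x^α} for all x ≥ 0. Then for every r > 0, ∫_0^∞ s^{-r} μ_t^α(ds) = Γ(r/α) / (α Γ(r)) · t^{-r/α}. -/
open MeasureTheory Real Set Filter Topology

/-!
Integrating `Γ(r) s^(-r) = ∫₀^∞ x^(r-1) e^(-xs) dx` against `μ` and swapping the integrals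
(Tonelli) gives `Γ(r) ∫ s^(-r) dμ = ∫₀^∞ x^(r-1) e^(-t x^α) dx = Γ(r/α) t^(-r/α) / α`.
The Gamma identity fails at `s = 0`, so the Laplace transform is needed over `(0, ∞)`; this is
harmless because `e^(-t x^α) → 0` as `x → ∞` shows that `μ` has no atom at `0`.
-/

lemma lintegral_rpow_mul_exp_neg_mul_rpow {p q b : ℝ} (hp : 0 < p) (hq : -1 < q) (hb : 0 < b) :
    ∫⁻ x in Ioi (0 : ℝ), ENNReal.ofReal (x ^ q * exp (-b * x ^ p)) =
      ENNReal.ofReal (b ^ (-(q + 1) / p) * (1 / p) * Gamma ((q + 1) / p)) := by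
  have hI := integral_rpow_mul_exp_neg_mul_rpow hp hq hb
  have hΓ := Gamma_pos_of_pos (div_pos (neg_lt_iff_pos_add.mp hq) hp)
  -- the integral is positive, so it is not the junk value of a non-integrable function
  have hf : IntegrableOn (fun x : ℝ => x ^ q * exp (-b * x ^ p)) (Ioi 0) :=
    Integrable.of_integral_ne_zero (by rw [hI]; positivity)
  rw [← hI]
  refine (ofReal_integral_eq_lintegral_ofReal hf ?_).symm
  filter_upwards [ae_restrict_mem measurableSet_Ioi] with x hx
  exact mul_nonneg (rpow_nonneg hx.le _) (exp_pos _).le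

lemma lintegral_rpow_mul_exp_neg_mul {r s : ℝ} (hr : 0 < r) (hs : 0 < s) :
    ∫⁻ x in Ioi (0 : ℝ), ENNReal.ofReal (x ^ (r - 1)) * ENNReal.ofReal (exp (-(x * s))) =
      ENNReal.ofReal (Gamma r) * ENNReal.ofReal (s ^ (-r)) := by
  have h := lintegral_rpow_mul_exp_neg_mul_rpow one_pos (q := r - 1) (by linarith) hs
  simp only [sub_add_cancel, div_one, rpow_one, mul_one] at h
  rw [← ENNReal.ofReal_mul (Gamma_pos_of_pos hr).le, mul_comm (Gamma r), ← h]
  refine setLIntegral_congr_fun measurableSet_Ioi fun x hx => ?_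
  rw [← ENNReal.ofReal_mul (rpow_nonneg (le_of_lt hx) _), neg_mul, mul_comm x s]

lemma ofReal_Gamma_mul_lintegral_rpow_neg (μ : Measure ℝ) [SFinite μ] {r : ℝ} (hr : 0 < r) :
    ENNReal.ofReal (Gamma r) * ∫⁻ s in Ioi 0, ENNReal.ofReal (s ^ (-r)) ∂μ =
      ∫⁻ x in Ioi 0, ENNReal.ofReal (x ^ (r - 1)) *
        ∫⁻ s in Ioi 0, ENNReal.ofReal (exp (-(x * s))) ∂μ := by
  calc _ = ∫⁻ s in Ioi 0, (∫⁻ x in Ioi 0,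
          ENNReal.ofReal (x ^ (r - 1)) * ENNReal.ofReal (exp (-(x * s)))) ∂μ := by
        rw [← lintegral_const_mul' _ _ ENNReal.ofReal_ne_top]
        exact setLIntegral_congr_fun measurableSet_Ioi fun s hs =>
          (lintegral_rpow_mul_exp_neg_mul hr (mem_Ioi.mp hs)).symm
    _ = ∫⁻ x in Ioi 0, ∫⁻ s in Ioi 0,
          ENNReal.ofReal (x ^ (r - 1)) * ENNReal.ofReal (exp (-(x * s))) ∂μ :=
        lintegral_lintegral_swap (Measurable.aemeasurable (by fun_prop))
    _ = _ := lintegral_congr fun x => lintegral_const_mul' _ _ ENNReal.ofReal_ne_top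

section LaplaceTransform

variable {μ : Measure ℝ} [IsFiniteMeasure μ] {x : ℝ}

lemma integrableOn_exp_neg_mul_Ici (hx : 0 ≤ x) :
    IntegrableOn (fun s => exp (-(x * s))) (Ici 0) μ := by
  refine Measure.integrableOn_of_bounded (M := 1) (measure_ne_top μ _) (by fun_prop) ?_
  filter_upwards [ae_restrict_mem measurableSet_Ici] with s hs
  rw [norm_of_nonneg (exp_pos _).le, exp_le_one_iff, neg_nonpos]
  exact mul_nonneg hx hs

lemma measureReal_singleton_zero_le_setIntegral_exp_neg_mul (hx : 0 ≤ x) :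
    μ.real {0} ≤ ∫ s in Ici 0, exp (-(x * s)) ∂μ :=
  calc μ.real {0} = ∫ s in {0}, exp (-(x * s)) ∂μ := by simp [measureReal_def]
    _ ≤ ∫ s in Ici 0, exp (-(x * s)) ∂μ :=
      setIntegral_mono_set (integrableOn_exp_neg_mul_Ici hx)
        (Eventually.of_forall fun s => (exp_pos _).le)
        (singleton_subset_iff.mpr self_mem_Ici).eventuallyLE

lemma measure_singleton_zero_eq_zero_of_tendsto
    (h : Tendsto (fun x => ∫ s in Ici 0, exp (-(x * s)) ∂μ) atTop (𝓝 0)) : μ {0} = 0 := by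
  have : μ.real {0} ≤ 0 := ge_of_tendsto h (eventually_atTop.mpr
    ⟨0, fun _ hx => measureReal_singleton_zero_le_setIntegral_exp_neg_mul hx⟩)
  exact (measureReal_eq_zero_iff).mp (le_antisymm this measureReal_nonneg)

lemma lintegral_exp_neg_mul_Ioi (hμ0 : μ {0} = 0) (hx : 0 ≤ x) :
    ∫⁻ s in Ioi 0, ENNReal.ofReal (exp (-(x * s))) ∂μ =
      ENNReal.ofReal (∫ s in Ici 0, exp (-(x * s)) ∂μ) := by
  rw [integral_Ici_eq_integral_Ioi' hμ0, ofReal_integral_eq_lintegral_ofReal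
    ((integrableOn_exp_neg_mul_Ici hx).mono_set Ioi_subset_Ici_self)
    (Eventually.of_forall fun s => (exp_pos _).le)]

end LaplaceTransform

theorem stmt_1_general (α t : ℝ) (hα : 0 < α) (ht : 0 < t)
    (μ : Measure ℝ) [IsProbabilityMeasure μ]
    (hlaplace : ∀ x : ℝ, 0 ≤ x →
      ∫ s in Ici (0:ℝ), Real.exp (-(x * s)) ∂μ = Real.exp (-(t * x ^ α)))
    (r : ℝ) (hr : 0 < r) :
    ∫ s in Ici (0:ℝ), s ^ (-r) ∂μ =
      Real.Gamma (r / α) / (α * Real.Gamma r) * t ^ (-(r / α)) := by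
  have hΓ := Gamma_pos_of_pos hr
  have hμ0 : μ {0} = 0 := by
    refine measure_singleton_zero_eq_zero_of_tendsto ?_
    refine (tendsto_exp_atBot.comp (tendsto_neg_atTop_atBot.comp
      ((tendsto_rpow_atTop hα).const_mul_atTop ht))).congr' ?_
    exact eventually_atTop.mpr ⟨0, fun x hx => (hlaplace x hx).symm⟩
  have key : ENNReal.ofReal (Gamma r) * ∫⁻ s in Ioi 0, ENNReal.ofReal (s ^ (-r)) ∂μ =
      ENNReal.ofReal (Gamma r) *
        ENNReal.ofReal (Gamma (r / α) / (α * Gamma r) * t ^ (-(r / α))) := by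
    rw [ofReal_Gamma_mul_lintegral_rpow_neg μ hr]
    calc _ = ∫⁻ x in Ioi 0, ENNReal.ofReal (x ^ (r - 1) * exp (-t * x ^ α)) :=
          setLIntegral_congr_fun measurableSet_Ioi fun x hx => by
            rw [lintegral_exp_neg_mul_Ioi hμ0 (le_of_lt hx), hlaplace x (le_of_lt hx),
              ← ENNReal.ofReal_mul (rpow_nonneg (le_of_lt hx) _), neg_mul]
      _ = _ := by
          rw [lintegral_rpow_mul_exp_neg_mul_rpow hα (by linarith) ht,
            ← ENNReal.ofReal_mul hΓ.le, sub_add_cancel, neg_div]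
          congr 1
          field_simp
  rw [ENNReal.mul_right_inj (by simpa using hΓ) ENNReal.ofReal_ne_top] at key
  rw [integral_Ici_eq_integral_Ioi' hμ0, integral_eq_lintegral_of_nonneg_ae
    (ae_restrict_of_forall_mem measurableSet_Ioi fun s hs => rpow_nonneg (le_of_lt hs) _)
    (by fun_prop), key, ENNReal.toReal_ofReal (by positivity)]

theorem stmt_1 (α t : ℝ) (hα : 0 < α) (hα1 : α ≤ 1) (ht : 0 < t)
    (μ : Measure ℝ) [IsProbabilityMeasure μ] (hsupp : μ (Ici (0:ℝ)) = 1)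
    (hlaplace : ∀ x : ℝ, 0 ≤ x →
      ∫ s in Ici (0:ℝ), Real.exp (-(x * s)) ∂μ = Real.exp (-(t * x ^ α)))
    (r : ℝ) (hr : 0 < r) :
    ∫ s in Ici (0:ℝ), s ^ (-r) ∂μ =
      Real.Gamma (r / α) / (α * Real.Gamma r) * t ^ (-(r / α)) :=
  stmt_1_general α t hα ht μ hlaplace r hr
end

section
/- For any a > 0 and any b with 0 < b ≤ 1, the series ∑_{n=1}^∞ a^n / n^{bn} satisfies ∑_{n=1}^∞ a^n / n^{bn} ≤ (e^{(2a)^{1/b}/2} - 1)^b. -/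
open Real

theorem stmt_2 (a b : ℝ) (ha : 0 < a) (hb0 : 0 < b) (hb1 : b ≤ 1) :
    ∑' n : ℕ, a ^ (n + 1) / ((n + 1 : ℕ) : ℝ) ^ (b * (n + 1 : ℕ)) ≤
      (Real.exp ((2 * a) ^ (1 / b) / 2) - 1) ^ b := by
  set c : ℝ := (2 * a) ^ (1 / b) with hc_def
  have h2a : (0:ℝ) < 2 * a := by linarith
  have hc : 0 < c := Real.rpow_pos_of_pos h2a _
  have hcb : c ^ b = 2 * a := by
    rw [hc_def, ← Real.rpow_mul h2a.le, one_div, inv_mul_cancel₀ hb0.ne', Real.rpow_one]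
  set t : ℝ := c / 2 with ht_def
  have ht : 0 < t := by positivity
  -- the target right-hand side base
  have hE : (0:ℝ) ≤ Real.exp t - 1 := by
    have := Real.one_le_exp ht.le
    linarith
  set T : ℕ → ℝ := fun n => a ^ (n + 1) / ((n + 1 : ℕ) : ℝ) ^ (b * (n + 1 : ℕ)) with hT_def
  have hTnonneg : ∀ n, 0 ≤ T n := by
    intro n
    have : (0:ℝ) < ((n + 1 : ℕ) : ℝ) ^ (b * (n + 1 : ℕ)) :=
      Real.rpow_pos_of_pos (by positivity) _
    positivity
  -- weights and values
  set w : ℕ → ℝ := fun n => (1/2 : ℝ) ^ (n + 1) with hw_def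
  set x : ℕ → ℝ := fun n => c ^ (n + 1) / ((n+1).factorial : ℝ) with hx_def
  have hxpos : ∀ n, 0 < x n := fun n => by
    have : (0:ℝ) < ((n+1).factorial : ℝ) := by positivity
    positivity
  set f : ℕ → ℝ := fun n => (x n) ^ b with hf_def
  have hwnonneg : ∀ n, 0 ≤ w n := fun n => by positivity
  have hfnonneg : ∀ n, 0 ≤ f n := fun n => (Real.rpow_pos_of_pos (hxpos n) _).le
  -- termwise bound : T n ≤ w n * f n
  have hterm : ∀ n : ℕ, T n ≤ w n * f n := by
    intro n
    have hfact_pos : (0:ℝ) < ((n+1).factorial : ℝ) := by positivity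
    have hwf : w n * f n = a ^ (n+1) / ((n+1).factorial : ℝ) ^ b := by
      have hxb : (x n) ^ b = (2*a) ^ (n+1) / ((n+1).factorial : ℝ) ^ b := by
        rw [hx_def]
        rw [Real.div_rpow (by positivity) (by positivity)]
        congr 1
        rw [← Real.rpow_natCast c (n+1), ← Real.rpow_mul hc.le, mul_comm,
          Real.rpow_mul hc.le, hcb, Real.rpow_natCast]
      rw [hf_def]
      simp only []
      rw [hxb, hw_def]
      simp only []
      rw [← mul_div_assoc, ← mul_pow]
      ring_nf
    rw [hwf, hT_def]
    simp only []
    have hden : ((n+1).factorial : ℝ) ^ b ≤ ((n + 1 : ℕ) : ℝ) ^ (b * (n + 1 : ℕ)) := by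
      have h1 : ((n + 1 : ℕ) : ℝ) ^ (b * ((n + 1 : ℕ) : ℝ)) =
          (((n + 1 : ℕ) : ℝ) ^ ((n+1 : ℕ)) : ℝ) ^ b := by
        rw [mul_comm, Real.rpow_mul (by positivity), Real.rpow_natCast]
      rw [h1]
      apply Real.rpow_le_rpow (by positivity) _ hb0.le
      have := Nat.factorial_le_pow (n+1)
      exact_mod_cast this
    have hd0 : (0:ℝ) < ((n+1).factorial : ℝ) ^ b := Real.rpow_pos_of_pos hfact_pos _
    gcongr
  -- partial sums of weights are ≤ 1
  have hwsum : ∀ s : Finset ℕ, ∑ n ∈ s, w n ≤ 1 := by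
    intro s
    have hsum : Summable w := by
      apply Summable.comp_injective (summable_geometric_of_lt_one (by norm_num) (by norm_num : (1/2:ℝ) < 1)) (add_left_injective 1)
    calc ∑ n ∈ s, w n ≤ ∑' n, w n := Summable.sum_le_tsum s (fun i _ => hwnonneg i) hsum
      _ = 1 := by
        rw [hw_def]
        simp only []
        have : ∀ n : ℕ, (1/2:ℝ) ^ (n+1) = (1/2:ℝ) ^ n * (1/2) := fun n => pow_succ _ _
        rw [tsum_congr this, tsum_mul_right,
          tsum_geometric_of_lt_one (by norm_num) (by norm_num)]
        norm_num
  -- partial sums of w * f^(b⁻¹) are ≤ exp t - 1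
  have hwx : ∀ n, w n * (f n) ^ b⁻¹ = t ^ (n+1) / ((n+1).factorial : ℝ) := by
    intro n
    have : (f n) ^ b⁻¹ = x n := Real.rpow_rpow_inv (hxpos n).le hb0.ne'
    rw [this, hx_def, hw_def, ht_def]
    simp only []
    rw [← mul_div_assoc, ← mul_pow]
    ring_nf
  have hxsum : ∀ s : Finset ℕ, ∑ n ∈ s, w n * (f n) ^ b⁻¹ ≤ Real.exp t - 1 := by
    intro s
    obtain ⟨N, hN⟩ : ∃ N, s ⊆ Finset.range N := ⟨(s.sup id) + 1, fun n hn =>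
      Finset.mem_range.mpr (Nat.lt_succ_of_le (Finset.le_sup (f := id) hn))⟩
    have hnn : ∀ n, 0 ≤ w n * (f n) ^ b⁻¹ := fun n => by
      have := hfnonneg n
      have := hwnonneg n
      positivity
    calc ∑ n ∈ s, w n * (f n) ^ b⁻¹
        ≤ ∑ n ∈ Finset.range N, w n * (f n) ^ b⁻¹ :=
          Finset.sum_le_sum_of_subset_of_nonneg hN (fun i _ _ => hnn i)
      _ = ∑ n ∈ Finset.range N, t ^ (n+1) / ((n+1).factorial : ℝ) :=
          Finset.sum_congr rfl (fun n _ => hwx n)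
      _ = (∑ i ∈ Finset.range (N+1), t ^ i / (i.factorial : ℝ)) - 1 := by
          rw [Finset.sum_range_succ' (fun i => t ^ i / (i.factorial : ℝ)) N]
          simp
      _ ≤ Real.exp t - 1 := by
          have := Real.sum_le_exp_of_nonneg ht.le (N+1)
          linarith
  -- main finset bound via Hölder
  have hmain : ∀ s : Finset ℕ, ∑ n ∈ s, T n ≤ (Real.exp t - 1) ^ b := by
    intro s
    have hp : (1:ℝ) ≤ b⁻¹ := (one_le_inv₀ hb0).mpr hb1
    have holder := Real.inner_le_weight_mul_Lp_of_nonneg s hp w f hwnonneg hfnonneg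
    rw [inv_inv] at holder
    have hnn : ∀ n, 0 ≤ w n * (f n) ^ b⁻¹ := fun n => by
      have := hfnonneg n; have := hwnonneg n; positivity
    calc ∑ n ∈ s, T n ≤ ∑ n ∈ s, w n * f n := Finset.sum_le_sum fun n _ => hterm n
      _ ≤ (∑ n ∈ s, w n) ^ (1 - b) * (∑ n ∈ s, w n * f n ^ b⁻¹) ^ b := holder
      _ ≤ 1 * (Real.exp t - 1) ^ b := by
          apply mul_le_mul
          · exact Real.rpow_le_one (Finset.sum_nonneg fun i _ => hwnonneg i) (hwsum s)
              (by linarith)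
          · exact Real.rpow_le_rpow
              (Finset.sum_nonneg fun i _ => hnn i) (hxsum s) hb0.le
          · exact Real.rpow_nonneg (Finset.sum_nonneg fun i _ => by
              have := hfnonneg i; have := hwnonneg i; positivity) _
          · exact zero_le_one
      _ = (Real.exp t - 1) ^ b := one_mul _
  -- conclude
  by_cases hS : Summable T
  · exact Summable.tsum_le_of_sum_le hS hmain
  · rw [tsum_eq_zero_of_not_summable hS]
    exact Real.rpow_nonneg hE _
end

section
/- Let (E, B) be a measurable space, P_s (s ≥ 0) a family of Markov kernels on E, and μ_t a probability measure on [0,∞). Define the subordinated operator P_t^B f(x) = ∫_0^∞ P_s f(x) μ_t(ds) for bounded nonnegative measurable f. Suppose for some p > 1 and a function Φ: (0,∞) × E × E → [0,∞) the Harnack inequality (P_s f(x))^p ≤ e^{Φ(s,x,y)} P_s f^p(y) holds for all s > 0, x, y ∈ E, f ∈ B_b^+(E). Then (P_t^B f(x))^p ≤ (P_t^B f^p(y)) · (∫_0^∞ e^{Φ(s,x,y)/(p-1)} μ_t(ds))^{p-1}, provided the latter integral is finite. -/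
open MeasureTheory Real Set

/-! On `s > 0` the Harnack inequality says `P_s f(x) ≤ (P_s f^p(y))^{1/p} · (e^{Φ/(p-1)})^{(p-1)/p}`;
integrating over `μ_t` and applying Hölder's inequality with exponents `p` and `p/(p-1)` to the
right-hand side gives the subordinated inequality. -/

namespace Real

variable {p q : ℝ}

theorem rpow_one_div_mul_rpow_one_div_rpow (hpq : p.HolderConjugate q) {b c : ℝ}
    (hb : 0 ≤ b) (hc : 0 ≤ c) : (b ^ (1 / p) * c ^ (1 / q)) ^ p = b * c ^ (p - 1) := by
  rw [mul_rpow (rpow_nonneg hb _) (rpow_nonneg hc _), ← rpow_mul hb, ← rpow_mul hc,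
    one_div_mul_cancel hpq.ne_zero, rpow_one, one_div_mul_eq_div, hpq.div_conj_eq_sub_one]

theorem le_rpow_one_div_mul_rpow_one_div_of_rpow_le (hpq : p.HolderConjugate q) {a b c : ℝ}
    (ha : 0 ≤ a) (hb : 0 ≤ b) (hc : 0 ≤ c) (h : a ^ p ≤ b * c ^ (p - 1)) :
    a ≤ b ^ (1 / p) * c ^ (1 / q) := by
  rwa [← rpow_le_rpow_iff ha (by positivity) hpq.pos,
    rpow_one_div_mul_rpow_one_div_rpow hpq hb hc]

end Real

namespace MeasureTheory

variable {α : Type*} [MeasurableSpace α] {μ : Measure α} {p q : ℝ} {F G : α → ℝ}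

theorem Integrable.memLp_rpow_one_div (hF : Integrable F μ) (hF0 : 0 ≤ᵐ[μ] F) (hp : 0 < p) :
    MemLp (fun a => F a ^ (1 / p)) (ENNReal.ofReal p) μ := by
  have h := (memLp_one_iff_integrable.2 hF).norm_rpow_div (ENNReal.ofReal (1 / p))
  rw [ENNReal.toReal_ofReal (by positivity), one_div (ENNReal.ofReal _),
    ← ENNReal.ofReal_inv_of_pos (by positivity), one_div, inv_inv] at h
  refine h.ae_eq ?_
  filter_upwards [hF0] with a ha
  rw [norm_of_nonneg ha, one_div]

theorem integral_rpow_one_div_mul_rpow_one_div_le (hpq : p.HolderConjugate q)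
    (hF : Integrable F μ) (hF0 : 0 ≤ᵐ[μ] F) (hG : Integrable G μ) (hG0 : 0 ≤ᵐ[μ] G) :
    ∫ a, F a ^ (1 / p) * G a ^ (1 / q) ∂μ ≤ (∫ a, F a ∂μ) ^ (1 / p) * (∫ a, G a ∂μ) ^ (1 / q) := by
  have hFp : ∫ a, (F a ^ (1 / p)) ^ p ∂μ = ∫ a, F a ∂μ := integral_congr_ae <| by
    filter_upwards [hF0] with a ha
    rw [← rpow_mul ha, one_div_mul_cancel hpq.ne_zero, rpow_one]
  have hGq : ∫ a, (G a ^ (1 / q)) ^ q ∂μ = ∫ a, G a ∂μ := integral_congr_ae <| by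
    filter_upwards [hG0] with a ha
    rw [← rpow_mul ha, one_div_mul_cancel hpq.symm.ne_zero, rpow_one]
  rw [← hFp, ← hGq]
  exact integral_mul_le_Lp_mul_Lq_of_nonneg hpq (hF0.mono fun a ha => rpow_nonneg ha _)
    (hG0.mono fun a ha => rpow_nonneg ha _) (hF.memLp_rpow_one_div hF0 hpq.pos)
    (hG.memLp_rpow_one_div hG0 hpq.symm.pos)

theorem integral_rpow_le_of_rpow_le_mul_rpow (hp : 1 < p) {u : α → ℝ} (hu0 : 0 ≤ᵐ[μ] u)
    (hF : Integrable F μ) (hF0 : 0 ≤ᵐ[μ] F) (hG : Integrable G μ) (hG0 : 0 ≤ᵐ[μ] G)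
    (h : ∀ᵐ a ∂μ, u a ^ p ≤ F a * G a ^ (p - 1)) :
    (∫ a, u a ∂μ) ^ p ≤ (∫ a, F a ∂μ) * (∫ a, G a ∂μ) ^ (p - 1) := by
  have hpq := HolderConjugate.conjExponent hp
  have := hpq.ennrealOfReal
  have hbound : ∀ᵐ a ∂μ, u a ≤ F a ^ (1 / p) * G a ^ (1 / p.conjExponent) := by
    filter_upwards [hu0, hF0, hG0, h] with a hua hFa hGa ha
    exact le_rpow_one_div_mul_rpow_one_div_of_rpow_le hpq hua hFa hGa ha
  have hint : Integrable (fun a => F a ^ (1 / p) * G a ^ (1 / p.conjExponent)) μ :=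
    (hF.memLp_rpow_one_div hF0 hpq.pos).integrable_mul (hG.memLp_rpow_one_div hG0 hpq.symm.pos)
  calc (∫ a, u a ∂μ) ^ p
      ≤ ((∫ a, F a ∂μ) ^ (1 / p) * (∫ a, G a ∂μ) ^ (1 / p.conjExponent)) ^ p :=
        rpow_le_rpow (integral_nonneg_of_ae hu0)
          ((integral_mono_of_nonneg hu0 hint hbound).trans
            (integral_rpow_one_div_mul_rpow_one_div_le hpq hF hF0 hG hG0)) hpq.pos.le
    _ = (∫ a, F a ∂μ) * (∫ a, G a ∂μ) ^ (p - 1) :=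
        rpow_one_div_mul_rpow_one_div_rpow hpq (integral_nonneg_of_ae hF0)
          (integral_nonneg_of_ae hG0)

end MeasureTheory

theorem stmt_8_general {E : Type*} [MeasurableSpace E]
    (P : ℝ → (E → ℝ) → (E → ℝ))
    (μt : Measure ℝ)
    (p : ℝ) (hp : 1 < p)
    (Φ : ℝ → E → E → ℝ)
    (f : E → ℝ) (hf_nonneg : ∀ z, 0 ≤ f z)
    (x y : E)
    -- the semigroup is nonnegative on nonnegative functions
    (hpos : ∀ s (g : E → ℝ), (∀ z, 0 ≤ g z) → ∀ z, 0 ≤ P s g z)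
    -- the Harnack inequality for P_s
    (hHarnack : ∀ s, 0 < s → (P s f x) ^ p ≤ Real.exp (Φ s x y) * P s (fun z => f z ^ p) y)
    -- integrability assumptions
    (hInt2 : Integrable (fun s => P s (fun z => f z ^ p) y) μt)
    (hInt3 : Integrable (fun s => Real.exp (Φ s x y / (p - 1))) μt) :
    (∫ s in Ioi (0:ℝ), P s f x ∂μt) ^ p ≤
      (∫ s in Ioi (0:ℝ), P s (fun z => f z ^ p) y ∂μt) *
        (∫ s in Ioi (0:ℝ), Real.exp (Φ s x y / (p - 1)) ∂μt) ^ (p - 1) := by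
  refine integral_rpow_le_of_rpow_le_mul_rpow hp (ae_of_all _ fun s => hpos s f hf_nonneg x)
    hInt2.restrict (ae_of_all _ fun s => hpos s _ (fun z => rpow_nonneg (hf_nonneg z) p) y)
    hInt3.restrict (ae_of_all _ fun s => (exp_pos _).le) ?_
  refine (ae_restrict_iff' measurableSet_Ioi).2 (ae_of_all _ fun s hs => ?_)
  rw [← exp_mul, div_mul_cancel₀ _ (sub_pos.2 hp).ne', mul_comm]
  exact hHarnack s hs

/-- Subordination of a Harnack inequality via Hölder's inequality. -/
theorem stmt_8 {E : Type*} [MeasurableSpace E]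
    (P : ℝ → (E → ℝ) → (E → ℝ))
    (μt : Measure ℝ) [IsProbabilityMeasure μt] (hsupp : μt (Iio (0:ℝ)) = 0)
    (p : ℝ) (hp : 1 < p)
    (Φ : ℝ → E → E → ℝ) (hΦ : ∀ s x y, 0 ≤ Φ s x y)
    (f : E → ℝ) (hf_meas : Measurable f) (hf_nonneg : ∀ z, 0 ≤ f z)
    (hf_bdd : ∃ M, ∀ z, f z ≤ M)
    (x y : E)
    -- the semigroup is nonnegative on nonnegative functions
    (hpos : ∀ s (g : E → ℝ), (∀ z, 0 ≤ g z) → ∀ z, 0 ≤ P s g z)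
    -- the Harnack inequality for P_s
    (hHarnack : ∀ s, 0 < s → (P s f x) ^ p ≤ Real.exp (Φ s x y) * P s (fun z => f z ^ p) y)
    -- integrability assumptions
    (hInt1 : Integrable (fun s => P s f x) μt)
    (hInt2 : Integrable (fun s => P s (fun z => f z ^ p) y) μt)
    (hInt3 : Integrable (fun s => Real.exp (Φ s x y / (p - 1))) μt) :
    (∫ s in Ioi (0:ℝ), P s f x ∂μt) ^ p ≤
      (∫ s in Ioi (0:ℝ), P s (fun z => f z ^ p) y ∂μt) *
        (∫ s in Ioi (0:ℝ), Real.exp (Φ s x y / (p - 1)) ∂μt) ^ (p - 1) :=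
  stmt_8_general P μt p hp Φ f hf_nonneg x y hpos hHarnack hInt2 hInt3
end
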